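/- arXiv:0708.4007 — 5 statements merged into one kernel-verified Lean document; each statement's English description precedes it below -/
import Mathlib

section
/- There is a universal constant C > 0 with the following property. For every integer r ≥ 1, all positive reals a₁, …, a_r and all nonnegative reals ρ₁, …, ρ_r such that ρ_i·a_i is a nonnegative integer for each i, one has |∑_{i=1}^r log( e^{−a_i} a_i^{ρ_i a_i} / (ρ_i a_i)! ) − ∑_{i=1}^r (ρ_i − 1 − ρ_i log ρ_i) a_i| ≤ C · r · max(1, log(∑_{i=1}^r ρ_i a_i)), with the conventions 0 log 0 = 0 and max(1, log 0) = 1. -/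
open Real Finset

lemma log_factorial_bounds : ∀ m : ℕ, 1 ≤ m →
    (m:ℝ) * Real.log m - m + 1 ≤ Real.log (m.factorial) ∧
    Real.log (m.factorial) ≤ ((m:ℝ)+1) * Real.log ((m:ℝ)+1) - m := by
  intro m hm
  induction m with
  | zero => omega
  | succ n ih =>
    rcases Nat.eq_zero_or_pos n with hn | hn
    · subst hn
      norm_num [Nat.factorial]
      nlinarith [Real.log_two_gt_d9]
    · obtain ⟨ihl, ihu⟩ := ih hn
      have hx : (1:ℝ) ≤ (n:ℝ) := by exact_mod_cast hn
      have hx0 : (0:ℝ) < (n:ℝ) := by linarith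
      have key1 : Real.log ((n:ℝ)+1) - Real.log n ≤ 1/(n:ℝ) := by
        have h := Real.log_le_sub_one_of_pos (x := ((n:ℝ)+1)/n) (by positivity)
        rw [Real.log_div (by positivity) (by positivity)] at h
        have : ((n:ℝ)+1)/n - 1 = 1/(n:ℝ) := by field_simp; ring
        linarith [this ▸ h]
      have key2 : 1/((n:ℝ)+2) ≤ Real.log ((n:ℝ)+2) - Real.log ((n:ℝ)+1) := by
        have h := Real.log_le_sub_one_of_pos (x := ((n:ℝ)+1)/((n:ℝ)+2)) (by positivity)
        rw [Real.log_div (by positivity) (by positivity)] at h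
        have : ((n:ℝ)+1)/((n:ℝ)+2) - 1 = -(1/((n:ℝ)+2)) := by field_simp; ring
        linarith [this ▸ h]
      have hfac : Real.log ((n+1).factorial) = Real.log ((n:ℝ)+1) + Real.log (n.factorial) := by
        rw [Nat.factorial_succ]
        push_cast
        rw [Real.log_mul (by positivity) (by exact_mod_cast Nat.cast_ne_zero.mpr n.factorial_ne_zero)]
      push_cast
      rw [hfac]
      have k1 : (n:ℝ) * (Real.log ((n:ℝ)+1) - Real.log n) ≤ 1 := by
        calc (n:ℝ) * (Real.log ((n:ℝ)+1) - Real.log n) ≤ (n:ℝ) * (1/(n:ℝ)) :=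
              mul_le_mul_of_nonneg_left key1 (le_of_lt hx0)
          _ = 1 := by field_simp
      have k2 : 1 ≤ ((n:ℝ)+2) * (Real.log ((n:ℝ)+2) - Real.log ((n:ℝ)+1)) := by
        calc (1:ℝ) = ((n:ℝ)+2) * (1/((n:ℝ)+2)) := by field_simp
          _ ≤ _ := mul_le_mul_of_nonneg_left key2 (by positivity)
      constructor
      · nlinarith [k1, ihl]
      · have e2 : ((n:ℝ)+1+1) = (n:ℝ)+2 := by ring
        rw [e2]
        nlinarith [k2, ihu]

lemma diff_bound' (m : ℕ) :
    |(m:ℝ) * Real.log m - m - Real.log m.factorial| ≤ 1 + Real.log ((m:ℝ)+1) := by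
  rcases Nat.eq_zero_or_pos m with h | h
  · subst h; simp
  · obtain ⟨hl, hu⟩ := log_factorial_bounds m h
    have hx : (1:ℝ) ≤ (m:ℝ) := by exact_mod_cast h
    have key1 : Real.log ((m:ℝ)+1) - Real.log m ≤ 1/(m:ℝ) := by
      have hh := Real.log_le_sub_one_of_pos (x := ((m:ℝ)+1)/m) (by positivity)
      rw [Real.log_div (by positivity) (by positivity)] at hh
      have : ((m:ℝ)+1)/m - 1 = 1/(m:ℝ) := by field_simp; ring
      linarith [this ▸ hh]
    have k1 : (m:ℝ) * (Real.log ((m:ℝ)+1) - Real.log m) ≤ 1 := by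
      calc (m:ℝ) * (Real.log ((m:ℝ)+1) - Real.log m) ≤ (m:ℝ) * (1/(m:ℝ)) :=
            mul_le_mul_of_nonneg_left key1 (by linarith)
        _ = 1 := by field_simp
    have hlog1 : 0 ≤ Real.log ((m:ℝ)+1) := Real.log_nonneg (by linarith)
    rw [abs_le]
    constructor
    · nlinarith [k1, hu]
    · linarith [hl]

/-- **Lemma 1 of Balister–Bollobás–Sarkar–Walters.**
There is a universal constant `C > 0` such that for all `r ≥ 1`, positive reals
`a₁, …, a_r` and nonnegative reals `ρ₁, …, ρ_r` with each `ρ_i a_i` a nonnegative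
integer `m_i`, the total log-probability `∑ log(e^{-a_i} a_i^{m_i} / m_i!)` that
independent Poisson variables with means `a_i` take the values `m_i` differs from
`∑ (ρ_i − 1 − ρ_i log ρ_i) a_i` by at most `C · r · log₊(∑ ρ_i a_i)`,
where `log₊ x = max(1, log x)`.  (The conventions `0 log 0 = 0` and
`max(1, log 0) = 1` are automatic since `Real.log 0 = 0` in Lean.) -/
theorem poisson_product_log_probability :
    ∃ C : ℝ, 0 < C ∧
      ∀ (r : ℕ), 1 ≤ r →
        ∀ (a ρ : Fin r → ℝ) (m : Fin r → ℕ),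
          (∀ i, 0 < a i) → (∀ i, 0 ≤ ρ i) → (∀ i, ρ i * a i = (m i : ℝ)) →
          |(∑ i, Real.log (Real.exp (-(a i)) * (a i) ^ (m i) / (m i).factorial))
              - ∑ i, (ρ i - 1 - ρ i * Real.log (ρ i)) * a i|
            ≤ C * r * max 1 (Real.log (∑ i, ρ i * a i)) := by
  refine ⟨3, by norm_num, ?_⟩
  intro r hr a ρ m ha hρ hm
  have hsum : ∑ i, ρ i * a i = ((∑ i, m i : ℕ) : ℝ) := by
    push_cast; exact Finset.sum_congr rfl (fun i _ => hm i)
  set S : ℕ := ∑ i, m i with hS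
  have key : ∀ i, Real.log (Real.exp (-(a i)) * (a i) ^ (m i) / (m i).factorial)
      - (ρ i - 1 - ρ i * Real.log (ρ i)) * a i
      = (m i : ℝ) * Real.log (m i) - m i - Real.log (m i).factorial := by
    intro i
    have hai := ha i
    have hfne : ((m i).factorial : ℝ) ≠ 0 := by
      exact_mod_cast (m i).factorial_ne_zero
    have hlog : Real.log (Real.exp (-(a i)) * (a i) ^ (m i) / (m i).factorial)
        = -(a i) + (m i : ℝ) * Real.log (a i) - Real.log ((m i).factorial) := by
      rw [Real.log_div (by positivity) hfne, Real.log_mul (by positivity) (by positivity),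
        Real.log_exp, Real.log_pow]
      try push_cast
      try ring
    rcases Nat.eq_zero_or_pos (m i) with h0 | h0
    · have hρ0 : ρ i = 0 := by
        have := hm i
        rw [h0] at this
        push_cast at this
        exact (mul_eq_zero.mp this).resolve_right (ne_of_gt hai)
      rw [hlog, h0, hρ0]
      simp
    · have hmpos : (0:ℝ) < m i := by exact_mod_cast h0
      have hρi : ρ i = (m i : ℝ) / a i := by
        field_simp [eq_div_iff (ne_of_gt hai)]
        linarith [hm i]
      have hlogρ : Real.log (ρ i) = Real.log (m i) - Real.log (a i) := by
        rw [hρi, Real.log_div (by positivity) (by positivity)]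
      rw [hlog, hlogρ]
      have hma := hm i
      linear_combination (Real.log (m i) - Real.log (a i) - 1) * hma
  have hrw : (∑ i, Real.log (Real.exp (-(a i)) * (a i) ^ (m i) / (m i).factorial))
      - ∑ i, (ρ i - 1 - ρ i * Real.log (ρ i)) * a i
      = ∑ i, ((m i : ℝ) * Real.log (m i) - m i - Real.log (m i).factorial) := by
    rw [← Finset.sum_sub_distrib]
    exact Finset.sum_congr rfl (fun i _ => key i)
  rw [hrw, hsum]
  have per : ∀ i : Fin r, |(m i : ℝ) * Real.log (m i) - m i - Real.log (m i).factorial|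
      ≤ 3 * max 1 (Real.log (S:ℝ)) := by
    intro i
    have hmax : (1:ℝ) ≤ max 1 (Real.log (S:ℝ)) := le_max_left _ _
    rcases Nat.eq_zero_or_pos (m i) with h0 | h0
    · rw [h0]; simp
    · have hmS : m i ≤ S := Finset.single_le_sum (f := fun i => m i) (fun _ _ => Nat.zero_le _) (Finset.mem_univ i)
      have hS1 : 1 ≤ S := le_trans h0 hmS
      have hSr : (1:ℝ) ≤ (S:ℝ) := by exact_mod_cast hS1
      have h2S : ((m i : ℝ) + 1) ≤ 2 * S := by
        have : (m i : ℝ) ≤ S := by exact_mod_cast hmS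
        linarith
      have hlogle : Real.log ((m i : ℝ) + 1) ≤ Real.log 2 + Real.log (S:ℝ) := by
        calc Real.log ((m i : ℝ) + 1) ≤ Real.log (2 * S) :=
              Real.log_le_log (by positivity) h2S
          _ = Real.log 2 + Real.log (S:ℝ) := Real.log_mul (by norm_num) (by positivity)
      have hlog2 : Real.log 2 ≤ 1 := by
        linarith [Real.log_two_lt_d9]
      have hlogS : Real.log (S:ℝ) ≤ max 1 (Real.log (S:ℝ)) := le_max_right _ _
      calc |(m i : ℝ) * Real.log (m i) - m i - Real.log (m i).factorial|
          ≤ 1 + Real.log ((m i : ℝ) + 1) := diff_bound' (m i)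
        _ ≤ 3 * max 1 (Real.log (S:ℝ)) := by linarith
  calc |∑ i, ((m i : ℝ) * Real.log (m i) - m i - Real.log (m i).factorial)|
      ≤ ∑ i, |(m i : ℝ) * Real.log (m i) - m i - Real.log (m i).factorial| :=
        Finset.abs_sum_le_sum_abs _ _
    _ ≤ ∑ _i : Fin r, 3 * max 1 (Real.log (S:ℝ)) := Finset.sum_le_sum (fun i _ => per i)
    _ = 3 * r * max 1 (Real.log (S:ℝ)) := by
        rw [Finset.sum_const, Finset.card_univ, Fintype.card_fin]
        ring
end

section
/- For every positive integer m, if X is a Poisson random variable with mean m then ℙ(X ≥ m) ≥ 1/2; equivalently, ∑_{j=m}^{∞} e^{−m} m^j / j! ≥ 1/2. -/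
open MeasureTheory Real
open scoped ENNReal

/-- Key factorial inequality for the Poisson pairing argument:
`(2k+1+d)! ≤ (k+1+d)^(2k+1) * d!`, which encodes `(m+k)! ≤ m^(2k+1) * (m-1-k)!`
for `m = k+1+d`. -/
lemma poisson_aux_fact : ∀ (k d : ℕ),
    (2 * k + 1 + d).factorial ≤ (k + 1 + d) ^ (2 * k + 1) * d.factorial := by
  intro k
  induction k with
  | zero =>
    intro d
    simp [Nat.factorial_succ, Nat.add_comm 1 d]
  | succ k ih =>
    intro d
    have h1 := ih (d + 1)
    have e1 : 2 * (k + 1) + 1 + d = (2 * k + 1 + (d+1)) + 1 := by omega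
    have e2 : 2 * k + 1 + (d + 1) + 1 = 2 * (k+1) + 1 + d := by omega
    rw [e1, Nat.factorial_succ, e2]
    calc (2 * (k+1) + 1 + d) * (2 * k + 1 + (d+1)).factorial
        ≤ (2 * (k+1) + 1 + d) * ((k + 1 + (d+1)) ^ (2*k+1) * (d+1).factorial) :=
          Nat.mul_le_mul_left _ h1
      _ = ((2 * (k+1) + 1 + d) * (d+1)) * ((k + 2 + d) ^ (2*k+1) * d.factorial) := by
          rw [Nat.factorial_succ]; ring_nf
      _ ≤ ((k + 2 + d) * (k + 2 + d)) * ((k + 2 + d) ^ (2*k+1) * d.factorial) := by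
          apply Nat.mul_le_mul_right
          nlinarith
      _ = (k + 1 + 1 + d) ^ (2*(k+1)+1) * d.factorial := by ring

/-- The tail of a Poisson(m) distribution from `m` on has mass at least `1/2`. -/
lemma poisson_tail_half (m : ℕ) (hm : 0 < m) :
    (1 / 2 : ℝ) ≤ ∑' i : ℕ, Real.exp (-(m : ℝ)) * (m : ℝ) ^ (i + m) / (i + m).factorial := by
  set p : ℕ → ℝ := fun j => Real.exp (-(m : ℝ)) * (m : ℝ) ^ j / j.factorial with hp
  have hpnn : ∀ j, 0 ≤ p j := fun j => by positivity
  have hsum : Summable p := by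
    have := Real.summable_pow_div_factorial (m : ℝ)
    simpa [hp, mul_div_assoc] using this.mul_left (Real.exp (-(m : ℝ)))
  have htot : ∑' j, p j = 1 := by
    have h1 : ∑' j, (m : ℝ) ^ j / j.factorial = Real.exp m := by
      rw [Real.exp_eq_exp_ℝ, NormedSpace.exp_eq_tsum_div]
    calc ∑' j, p j = Real.exp (-(m : ℝ)) * ∑' j, (m : ℝ) ^ j / j.factorial := by
          rw [← tsum_mul_left]; simp [hp, mul_div_assoc]
      _ = 1 := by rw [h1, ← Real.exp_add]; simp
  -- pairing inequality: P(X = m-1-k) ≤ P(X = m+k)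
  have hpair : ∀ k < m, p (m - 1 - k) ≤ p (m + k) := by
    intro k hk
    set d := m - 1 - k with hd
    have hmd : m = k + 1 + d := by omega
    have hfact := poisson_aux_fact k d
    have hmk : m + k = 2 * k + 1 + d := by omega
    rw [hp]
    simp only
    rw [div_le_div_iff₀ (by positivity) (by positivity)]
    have hcast : ((m + k).factorial : ℝ) ≤ (m : ℝ) ^ (2 * k + 1) * d.factorial := by
      rw [hmk, hmd]
      exact_mod_cast hfact
    have hexp : (m : ℝ) ^ (m + k) = (m : ℝ) ^ d * (m : ℝ) ^ (2 * k + 1) := by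
      rw [← pow_add]; congr 1; omega
    calc Real.exp (-(m : ℝ)) * (m : ℝ) ^ d * ((m + k).factorial : ℝ)
        ≤ Real.exp (-(m : ℝ)) * (m : ℝ) ^ d * ((m : ℝ) ^ (2 * k + 1) * d.factorial) := by
          apply mul_le_mul_of_nonneg_left hcast (by positivity)
      _ = Real.exp (-(m : ℝ)) * (m : ℝ) ^ (m + k) * d.factorial := by rw [hexp]; ring
  -- head sum ≤ tail sum
  have hshift : Summable (fun i => p (i + m)) := (summable_nat_add_iff m).2 hsum
  have hshift' : Summable (fun i => p (m + i)) := by simpa [add_comm] using hshift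
  have hheadle : ∑ j ∈ Finset.range m, p j ≤ ∑' i, p (i + m) := by
    have h1 : ∑ j ∈ Finset.range m, p j = ∑ k ∈ Finset.range m, p (m - 1 - k) :=
      (Finset.sum_range_reflect p m).symm
    have h2 : ∑ k ∈ Finset.range m, p (m - 1 - k) ≤ ∑ k ∈ Finset.range m, p (m + k) :=
      Finset.sum_le_sum fun k hk => hpair k (Finset.mem_range.1 hk)
    have h3 : ∑ k ∈ Finset.range m, p (m + k) ≤ ∑' i, p (m + i) :=
      Summable.sum_le_tsum _ (fun i _ => hpnn _) hshift'
    rw [h1]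
    refine h2.trans (h3.trans_eq ?_)
    exact tsum_congr fun i => by rw [add_comm]
  have hsplit : ∑ j ∈ Finset.range m, p j + ∑' i, p (i + m) = 1 := by
    rw [Summable.sum_add_tsum_nat_add m hsum, htot]
  have : (1 / 2 : ℝ) ≤ ∑' i, p (i + m) := by linarith
  exact this.trans_eq (tsum_congr fun i => rfl)

/-- **Poisson median bound.** For every positive integer `m`, a Poisson random
variable `X` with mean `m` satisfies `ℙ(X ≥ m) ≥ 1/2`; equivalently,
`∑_{j=m}^∞ e^{−m} m^j / j! ≥ 1/2`. -/
theorem poisson_ge_mean_half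
    {Ω : Type*} [MeasurableSpace Ω] (μ : Measure Ω) [IsProbabilityMeasure μ]
    (m : ℕ) (hm : 0 < m)
    (X : Ω → ℕ) (hX : Measurable X)
    (hpois : ∀ n : ℕ, μ {ω | X ω = n}
      = ENNReal.ofReal (Real.exp (-(m : ℝ)) * (m : ℝ) ^ n / n.factorial)) :
    (1 / 2 : ℝ≥0∞) ≤ μ {ω | m ≤ X ω} ∧
    (1 / 2 : ℝ) ≤ ∑' j : ℕ,
      if m ≤ j then Real.exp (-(m : ℝ)) * (m : ℝ) ^ j / j.factorial else 0 := by
  set p : ℕ → ℝ := fun j => Real.exp (-(m : ℝ)) * (m : ℝ) ^ j / j.factorial with hp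
  have hpnn : ∀ j, 0 ≤ p j := fun j => by positivity
  have hsum : Summable p := by
    have := Real.summable_pow_div_factorial (m : ℝ)
    simpa [hp, mul_div_assoc] using this.mul_left (Real.exp (-(m : ℝ)))
  have hshift : Summable (fun i => p (i + m)) := (summable_nat_add_iff m).2 hsum
  have htail : (1 / 2 : ℝ) ≤ ∑' i : ℕ, p (i + m) := poisson_tail_half m hm
  constructor
  · -- measure part
    have hset : {ω | m ≤ X ω} = ⋃ i : ℕ, {ω | X ω = i + m} := by
      ext ω
      simp only [Set.mem_setOf_eq, Set.mem_iUnion]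
      constructor
      · intro h; exact ⟨X ω - m, by omega⟩
      · rintro ⟨i, hi⟩; omega
    have hdisj : Pairwise (Function.onFun Disjoint fun i : ℕ => {ω | X ω = i + m}) := by
      intro i j hij
      simp only [Function.onFun, Set.disjoint_left]
      intro ω h1 h2
      simp only [Set.mem_setOf_eq] at h1 h2
      omega
    have hmeas : ∀ i : ℕ, MeasurableSet {ω | X ω = i + m} := fun i =>
      hX (measurableSet_singleton (i + m))
    rw [hset, measure_iUnion hdisj hmeas]
    have : ∑' i : ℕ, μ {ω | X ω = i + m} = ENNReal.ofReal (∑' i : ℕ, p (i + m)) := by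
      rw [ENNReal.ofReal_tsum_of_nonneg (fun i => hpnn _) hshift]
      exact tsum_congr fun i => (hpois (i + m))
    rw [this]
    calc (1 / 2 : ℝ≥0∞) = ENNReal.ofReal (1 / 2) := by
          rw [ENNReal.ofReal_div_of_pos (by norm_num)]; norm_num
      _ ≤ ENNReal.ofReal (∑' i : ℕ, p (i + m)) := ENNReal.ofReal_le_ofReal htail
  · -- tsum part
    set g : ℕ → ℝ := fun j => if m ≤ j then p j else 0 with hg
    have hgsum : Summable g := by
      apply Summable.of_nonneg_of_le (fun j => ?_) (fun j => ?_) hsum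
      · by_cases h : m ≤ j <;> simp [hg, h, hpnn j]
      · by_cases h : m ≤ j <;> simp [hg, h, hpnn j]
    have hzero : ∑ j ∈ Finset.range m, g j = 0 :=
      Finset.sum_eq_zero fun j hj => by
        simp [hg, Nat.not_le.2 (Finset.mem_range.1 hj)]
    have htl : ∑' i : ℕ, g (i + m) = ∑' i : ℕ, p (i + m) :=
      tsum_congr fun i => by simp [hg, Nat.le_add_left]
    calc (1 / 2 : ℝ) ≤ ∑' i : ℕ, p (i + m) := htail
      _ = ∑' j : ℕ, g j := by rw [← htl, ← Summable.sum_add_tsum_nat_add m hgsum, hzero, zero_add]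
      _ = _ := rfl
end

section
/- Let Q ⊂ ℝ² be a closed axis-aligned square of side length s > 0, let c ∈ ℝ², and let 0 ≤ r₁ ≤ r₂. Then the Lebesgue area of {x ∈ Q : r₁ ≤ ‖x − c‖ ≤ r₂} is at most 4s·(r₂ − r₁). -/
open MeasureTheory Set

noncomputable def sideMap (c₁ c₂ h : ℝ) (p : ℝ × ℝ) : ℝ × ℝ :=
  (c₁ + p.2 * (p.1 - c₁), c₂ + p.2 * h)

def sideSet (c₁ h L s r₁ r₂ : ℝ) : Set (ℝ × ℝ) :=
  {p | p.1 ∈ Icc L (L+s) ∧ p.2 ∈ Icc (0:ℝ) 1 ∧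
    r₁ ≤ p.2 * Real.sqrt ((p.1-c₁)^2 + h^2) ∧ p.2 * Real.sqrt ((p.1-c₁)^2 + h^2) ≤ r₂}

lemma sideSet_isClosed (c₁ h L s r₁ r₂ : ℝ) : IsClosed (sideSet c₁ h L s r₁ r₂) := by
  have hcont : Continuous (fun p : ℝ × ℝ => p.2 * Real.sqrt ((p.1-c₁)^2 + h^2)) := by fun_prop
  exact ((isClosed_Icc.preimage continuous_fst).inter
    ((isClosed_Icc.preimage continuous_snd).inter (isClosed_Icc.preimage hcont)))

lemma sideSet_isCompact (c₁ h L s r₁ r₂ : ℝ) : IsCompact (sideSet c₁ h L s r₁ r₂) := by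
  refine IsCompact.of_isClosed_subset
    ((isCompact_Icc (a := L) (b := L+s)).prod (isCompact_Icc (a := (0:ℝ)) (b := 1)))
    (sideSet_isClosed c₁ h L s r₁ r₂) ?_
  rintro ⟨u, t⟩ ⟨h1, h2, _⟩
  exact ⟨h1, h2⟩

lemma sideMap_continuous (c₁ c₂ h : ℝ) : Continuous (sideMap c₁ c₂ h) := by
  unfold sideMap; fun_prop

noncomputable def sideDeriv (c₁ h : ℝ) (p : ℝ × ℝ) : ℝ × ℝ →L[ℝ] ℝ × ℝ :=
  LinearMap.toContinuousLinearMap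
    (Matrix.toLin (Module.Basis.finTwoProd ℝ) (Module.Basis.finTwoProd ℝ) !![p.2, p.1 - c₁; 0, h])

lemma sideDeriv_det (c₁ h : ℝ) (p : ℝ × ℝ) : (sideDeriv c₁ h p).det = p.2 * h := by
  rw [sideDeriv, ContinuousLinearMap.det, LinearMap.coe_toContinuousLinearMap,
    LinearMap.det_toLin, Matrix.det_fin_two_of]
  ring

lemma sideMap_hasFDerivAt (c₁ c₂ h : ℝ) (p : ℝ × ℝ) :
    HasFDerivAt (sideMap c₁ c₂ h) (sideDeriv c₁ h p) p := by
  obtain ⟨u, t⟩ := p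
  have h1 : HasFDerivAt (fun p : ℝ × ℝ => c₁ + p.2 * (p.1 - c₁))
      (t • (ContinuousLinearMap.fst ℝ ℝ ℝ) + (u - c₁) • (ContinuousLinearMap.snd ℝ ℝ ℝ)) (u, t) := by
    have := (hasFDerivAt_snd (𝕜 := ℝ) (E := ℝ) (F := ℝ) (p := (u,t))).mul
      ((hasFDerivAt_fst (𝕜 := ℝ) (E := ℝ) (F := ℝ) (p := (u,t))).sub_const c₁)
    simpa using (this.const_add c₁)
  have h2 : HasFDerivAt (fun p : ℝ × ℝ => c₂ + p.2 * h)
      (h • (ContinuousLinearMap.snd ℝ ℝ ℝ)) (u, t) := by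
    simpa using ((hasFDerivAt_snd (𝕜 := ℝ) (E := ℝ) (F := ℝ) (p := (u,t))).mul_const h).const_add c₂
  have := h1.prodMk h2
  refine HasFDerivAt.congr_fderiv this ?_
  apply ContinuousLinearMap.ext
  rintro ⟨du, dt⟩
  simp [sideDeriv, Matrix.toLin_apply, Module.Basis.coe_finTwoProd_repr, Fin.sum_univ_two,
    Module.Basis.finTwoProd_zero, Module.Basis.finTwoProd_one, Matrix.mulVec, dotProduct]

lemma side_lintegral (c₁ h L s r₁ r₂ : ℝ) (hr₁ : 0 ≤ r₁) (hr : r₁ ≤ r₂)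
    (hh : h ≠ 0) :
    ∫⁻ p in sideSet c₁ h L s r₁ r₂, ENNReal.ofReal |p.2 * h|
      ≤ ENNReal.ofReal (s * (r₂ - r₁)) := by
  have hr₂ : 0 ≤ r₂ := hr₁.trans hr
  set g : ℝ × ℝ → ENNReal := fun p => ENNReal.ofReal |p.2 * h| with hgdef
  have hE : MeasurableSet (sideSet c₁ h L s r₁ r₂) := (sideSet_isClosed _ _ _ _ _ _).measurableSet
  have hg : Measurable g := ((measurable_snd.mul_const h).abs).ennreal_ofReal
  rw [← lintegral_indicator hE g, Measure.volume_eq_prod,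
    lintegral_prod _ ((hg.indicator hE).aemeasurable)]
  have inner : ∀ u : ℝ,
      (∫⁻ t, (sideSet c₁ h L s r₁ r₂).indicator g (u, t))
        ≤ (Icc L (L+s)).indicator (fun _ => ENNReal.ofReal (r₂ - r₁)) u := by
    intro u
    by_cases hu : u ∈ Icc L (L+s)
    · set N := Real.sqrt ((u-c₁)^2 + h^2) with hN
      have hh2 : 0 < h^2 := by positivity
      have hN0 : 0 < N := Real.sqrt_pos.2 (by nlinarith [sq_nonneg (u-c₁)])
      have habs : |h| ≤ N := by
        rw [← Real.sqrt_sq_eq_abs]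
        exact Real.sqrt_le_sqrt (by nlinarith [sq_nonneg (u-c₁)])
      set a := r₁ / N with ha
      set b := min 1 (r₂ / N) with hb
      have hb0 : 0 ≤ b := le_min zero_le_one (by positivity)
      have pointwise : ∀ t, (sideSet c₁ h L s r₁ r₂).indicator g (u, t)
          ≤ (Icc a b).indicator (fun _ => ENNReal.ofReal (b * |h|)) t := by
        intro t
        by_cases hmem : (u, t) ∈ sideSet c₁ h L s r₁ r₂
        · rw [indicator_of_mem hmem]
          obtain ⟨-, ⟨ht0, ht1⟩, hA, hB⟩ := hmem
          have htb : t ≤ b := le_min ht1 ((le_div_iff₀ hN0).2 hB)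
          have hta : a ≤ t := (div_le_iff₀ hN0).2 hA
          rw [indicator_of_mem (show t ∈ Icc a b from ⟨hta, htb⟩)]
          refine ENNReal.ofReal_le_ofReal ?_
          rw [abs_mul, abs_of_nonneg ht0]
          exact mul_le_mul_of_nonneg_right htb (abs_nonneg h)
        · simp [indicator_of_notMem hmem]
      rw [indicator_of_mem hu]
      calc ∫⁻ t, (sideSet c₁ h L s r₁ r₂).indicator g (u, t)
          ≤ ∫⁻ t, (Icc a b).indicator (fun _ => ENNReal.ofReal (b * |h|)) t :=
            lintegral_mono pointwise
        _ = ENNReal.ofReal (b * |h|) * volume (Icc a b) :=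
            lintegral_indicator_const measurableSet_Icc _
        _ = ENNReal.ofReal (b * |h|) * ENNReal.ofReal (b - a) := by rw [Real.volume_Icc]
        _ ≤ ENNReal.ofReal (r₂ - r₁) := by
            rw [← ENNReal.ofReal_mul (by positivity)]
            apply ENNReal.ofReal_le_ofReal
            rcases le_or_gt (b - a) 0 with hba | hba
            · have h0 : b * |h| * (b - a) ≤ 0 :=
                mul_nonpos_of_nonneg_of_nonpos (mul_nonneg hb0 (abs_nonneg h)) hba
              linarith
            · have hbr : b ≤ r₂ / N := min_le_right _ _
              have hb1 : b ≤ 1 := min_le_left _ _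
              have h1 : b - a ≤ (r₂ - r₁)/N := by
                rw [sub_div]; simp only [ha]; linarith
              have h2 : |h| * ((r₂ - r₁)/N) ≤ r₂ - r₁ := by
                rw [mul_div_assoc'] at *
                rw [div_le_iff₀ hN0]
                nlinarith
              nlinarith [abs_nonneg h, mul_nonneg (abs_nonneg h) hba.le]
    · have hzero : ∀ t, (sideSet c₁ h L s r₁ r₂).indicator g (u, t) = 0 := by
        intro t
        exact indicator_of_notMem (fun hmem => hu hmem.1) _
      simp [hzero, indicator_of_notMem hu]
  calc ∫⁻ u, ∫⁻ t, (sideSet c₁ h L s r₁ r₂).indicator g (u, t)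
      ≤ ∫⁻ u, (Icc L (L+s)).indicator (fun _ => ENNReal.ofReal (r₂ - r₁)) u :=
        lintegral_mono inner
    _ = ENNReal.ofReal (r₂ - r₁) * volume (Icc L (L+s)) :=
        lintegral_indicator_const measurableSet_Icc _
    _ = ENNReal.ofReal (s * (r₂ - r₁)) := by
        rw [Real.volume_Icc, ← ENNReal.ofReal_mul (by linarith)]
        ring_nf

lemma side_vol (c₁ c₂ h L s r₁ r₂ : ℝ) (hr₁ : 0 ≤ r₁) (hr : r₁ ≤ r₂) :
    volume (sideMap c₁ c₂ h '' sideSet c₁ h L s r₁ r₂)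
      ≤ ENNReal.ofReal (s * (r₂ - r₁)) := by
  rcases eq_or_ne h 0 with hh | hh
  · have hsub : sideMap c₁ c₂ h '' sideSet c₁ h L s r₁ r₂ ⊆ (univ : Set ℝ) ×ˢ {c₂} := by
      rintro x ⟨p, -, rfl⟩
      refine ⟨trivial, ?_⟩
      simp [sideMap, hh]
    refine le_trans (measure_mono hsub) ?_
    rw [Measure.volume_eq_prod, Measure.prod_prod]
    simp
  · have hE : MeasurableSet (sideSet c₁ h L s r₁ r₂) := (sideSet_isClosed _ _ _ _ _ _).measurableSet
    have key := addHaar_image_le_lintegral_abs_det_fderiv (volume : Measure (ℝ × ℝ)) hE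
      (f := sideMap c₁ c₂ h) (f' := sideDeriv c₁ h)
      (fun p _ => (sideMap_hasFDerivAt c₁ c₂ h p).hasFDerivWithinAt)
    refine key.trans ?_
    calc ∫⁻ p in sideSet c₁ h L s r₁ r₂, ENNReal.ofReal |(sideDeriv c₁ h p).det|
        = ∫⁻ p in sideSet c₁ h L s r₁ r₂, ENNReal.ofReal |p.2 * h| :=
          lintegral_congr fun p => by rw [sideDeriv_det]
      _ ≤ ENNReal.ofReal (s * (r₂ - r₁)) := side_lintegral c₁ h L s r₁ r₂ hr₁ hr hh

lemma mem_side (c₁ c₂ L s r₁ r₂ T : ℝ) (x : ℝ × ℝ) (lam : ℝ) (hlam : 1 ≤ lam)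
    (hq1 : c₁ + lam * (x.1 - c₁) ∈ Icc L (L+s))
    (hq2 : c₂ + lam * (x.2 - c₂) = T)
    (hd1 : r₁ ≤ Real.sqrt ((x.1-c₁)^2 + (x.2-c₂)^2))
    (hd2 : Real.sqrt ((x.1-c₁)^2 + (x.2-c₂)^2) ≤ r₂) :
    x ∈ sideMap c₁ c₂ (T - c₂) '' sideSet c₁ (T - c₂) L s r₁ r₂ := by
  have hlam0 : 0 < lam := lt_of_lt_of_le one_pos hlam
  set v₁ := x.1 - c₁
  set v₂ := x.2 - c₂
  set d := Real.sqrt (v₁^2 + v₂^2) with hd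
  refine ⟨(c₁ + lam * v₁, 1/lam), ?_, ?_⟩
  · have hN : Real.sqrt ((c₁ + lam * v₁ - c₁)^2 + (T - c₂)^2) = lam * d := by
      rw [← hq2]
      have : (c₁ + lam * v₁ - c₁)^2 + (c₂ + lam * v₂ - c₂)^2 = lam^2 * (v₁^2 + v₂^2) := by ring
      rw [this, Real.sqrt_mul (sq_nonneg lam), Real.sqrt_sq hlam0.le, hd]
    refine ⟨hq1, ⟨by positivity, by rw [div_le_one hlam0]; exact hlam⟩, ?_, ?_⟩
    · rw [hN]
      field_simp
      exact hd1
    · rw [hN]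
      rw [div_mul_eq_mul_div, one_mul, mul_comm, mul_div_assoc, div_self hlam0.ne', mul_one]
      exact hd2
  · show (c₁ + (1/lam) * (c₁ + lam * v₁ - c₁), c₂ + (1/lam) * (T - c₂)) = x
    rw [← hq2]
    have e1 : c₁ + (1/lam) * (c₁ + lam * (x.1 - c₁) - c₁) = x.1 := by field_simp; ring
    have e2 : c₂ + (1/lam) * (c₂ + lam * (x.2 - c₂) - c₂) = x.2 := by field_simp; ring
    exact Prod.ext e1 e2

noncomputable def exitLam (a b c v : ℝ) : ℝ := if 0 < v then (b - c)/v else (a - c)/v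

lemma exit_ge_one {a b c v : ℝ} (hv : v ≠ 0) (h1 : a ≤ c + v) (h2 : c + v ≤ b) :
    1 ≤ exitLam a b c v := by
  rcases lt_or_gt_of_ne hv with hneg | hpos
  · rw [exitLam, if_neg (not_lt.2 hneg.le)]
    rw [le_div_iff_of_neg hneg]
    linarith
  · rw [exitLam, if_pos hpos, le_div_iff₀ hpos]
    linarith

lemma exit_stay {a b c v : ℝ} (hv : v ≠ 0) (h1 : a ≤ c + v) (h2 : c + v ≤ b)
    {lam : ℝ} (hl1 : 1 ≤ lam) (hl2 : lam ≤ exitLam a b c v) :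
    c + lam * v ∈ Icc a b := by
  rcases lt_or_gt_of_ne hv with hneg | hpos
  · rw [exitLam, if_neg (not_lt.2 hneg.le)] at hl2
    constructor
    · have : a - c ≤ lam * v := by
        have := mul_le_mul_of_nonpos_right hl2 hneg.le
        calc a - c = ((a - c)/v) * v := by field_simp
          _ ≤ lam * v := by nlinarith
      linarith
    · nlinarith
  · rw [exitLam, if_pos hpos] at hl2
    constructor
    · nlinarith
    · have : lam * v ≤ b - c := by
        calc lam * v ≤ ((b - c)/v) * v := by nlinarith
          _ = b - c := by field_simp
      linarith

lemma exit_hit {a b c v : ℝ} (hv : v ≠ 0) :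
    c + exitLam a b c v * v = if 0 < v then b else a := by
  rcases lt_or_gt_of_ne hv with hneg | hpos
  · rw [exitLam, if_neg (not_lt.2 hneg.le), if_neg (not_lt.2 hneg.le)]
    field_simp
    ring
  · rw [exitLam, if_pos hpos, if_pos hpos]
    field_simp
    ring

lemma cover (A₁ A₂ c₁ c₂ s r₁ r₂ : ℝ) :
    {p : ℝ × ℝ | p.1 ∈ Icc A₁ (A₁+s) ∧ p.2 ∈ Icc A₂ (A₂+s) ∧
      r₁ ≤ Real.sqrt ((p.1-c₁)^2 + (p.2-c₂)^2) ∧ Real.sqrt ((p.1-c₁)^2 + (p.2-c₂)^2) ≤ r₂}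
    ⊆ ({((c₁ : ℝ), (c₂ : ℝ))} : Set (ℝ × ℝ)) ∪
      (sideMap c₁ c₂ (A₂+s-c₂) '' sideSet c₁ (A₂+s-c₂) A₁ s r₁ r₂) ∪
      (sideMap c₁ c₂ (A₂-c₂) '' sideSet c₁ (A₂-c₂) A₁ s r₁ r₂) ∪
      (Prod.swap '' (sideMap c₂ c₁ (A₁+s-c₁) '' sideSet c₂ (A₁+s-c₁) A₂ s r₁ r₂)) ∪
      (Prod.swap '' (sideMap c₂ c₁ (A₁-c₁) '' sideSet c₂ (A₁-c₁) A₂ s r₁ r₂)) := by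
  intro p hp
  obtain ⟨hp1, hp2, hd1, hd2⟩ := hp
  simp only [mem_union, mem_singleton_iff]
  by_cases hc : p = (c₁, c₂)
  · exact Or.inl (Or.inl (Or.inl (Or.inl hc)))
  have h11 : A₁ ≤ c₁ + (p.1 - c₁) := by have := hp1.1; linarith
  have h12 : c₁ + (p.1 - c₁) ≤ A₁ + s := by have := hp1.2; linarith
  have h21 : A₂ ≤ c₂ + (p.2 - c₂) := by have := hp2.1; linarith
  have h22 : c₂ + (p.2 - c₂) ≤ A₂ + s := by have := hp2.2; linarith
  -- horizontal exit: through top or bottom side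
  have horiz : ∀ lam : ℝ, 1 ≤ lam → c₁ + lam * (p.1 - c₁) ∈ Icc A₁ (A₁+s) →
      c₂ + lam * (p.2 - c₂) = (if 0 < p.2 - c₂ then A₂+s else A₂) →
      (p ∈ sideMap c₁ c₂ (A₂+s-c₂) '' sideSet c₁ (A₂+s-c₂) A₁ s r₁ r₂) ∨
      (p ∈ sideMap c₁ c₂ (A₂-c₂) '' sideSet c₁ (A₂-c₂) A₁ s r₁ r₂) := by
    intro lam hl hq1 hq2
    by_cases hsgn : 0 < p.2 - c₂
    · rw [if_pos hsgn] at hq2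
      exact Or.inl (mem_side c₁ c₂ A₁ s r₁ r₂ (A₂+s) p lam hl hq1 hq2 hd1 hd2)
    · rw [if_neg hsgn] at hq2
      right
      have := mem_side c₁ c₂ A₁ s r₁ r₂ A₂ p lam hl hq1 hq2 hd1 hd2
      exact this
  -- vertical exit: through right or left side
  have hdsw1 : r₁ ≤ Real.sqrt ((p.2-c₂)^2 + (p.1-c₁)^2) := by rwa [add_comm]
  have hdsw2 : Real.sqrt ((p.2-c₂)^2 + (p.1-c₁)^2) ≤ r₂ := by rwa [add_comm]
  have vert : ∀ lam : ℝ, 1 ≤ lam → c₂ + lam * (p.2 - c₂) ∈ Icc A₂ (A₂+s) →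
      c₁ + lam * (p.1 - c₁) = (if 0 < p.1 - c₁ then A₁+s else A₁) →
      (p ∈ Prod.swap '' (sideMap c₂ c₁ (A₁+s-c₁) '' sideSet c₂ (A₁+s-c₁) A₂ s r₁ r₂)) ∨
      (p ∈ Prod.swap '' (sideMap c₂ c₁ (A₁-c₁) '' sideSet c₂ (A₁-c₁) A₂ s r₁ r₂)) := by
    intro lam hl hq1 hq2
    by_cases hsgn : 0 < p.1 - c₁
    · rw [if_pos hsgn] at hq2
      left
      refine ⟨p.swap, ?_, Prod.swap_swap p⟩
      exact mem_side c₂ c₁ A₂ s r₁ r₂ (A₁+s) p.swap lam hl hq1 hq2 hdsw1 hdsw2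
    · rw [if_neg hsgn] at hq2
      right
      refine ⟨p.swap, ?_, Prod.swap_swap p⟩
      exact mem_side c₂ c₁ A₂ s r₁ r₂ A₁ p.swap lam hl hq1 hq2 hdsw1 hdsw2
  by_cases hv1 : p.1 - c₁ = 0
  · have hv2 : p.2 - c₂ ≠ 0 := by
      intro hv2
      exact hc (Prod.ext (by linarith) (by linarith))
    set lam := exitLam A₂ (A₂+s) c₂ (p.2 - c₂) with hlamdef
    have hl : 1 ≤ lam := exit_ge_one hv2 h21 h22
    have hq1 : c₁ + lam * (p.1 - c₁) ∈ Icc A₁ (A₁+s) := by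
      rw [hv1, mul_zero, add_zero]
      constructor <;> [linarith [hp1.1]; linarith [hp1.2]]
    rcases horiz lam hl hq1 (exit_hit hv2) with h | h
    · exact Or.inl (Or.inl (Or.inl (Or.inr h)))
    · exact Or.inl (Or.inl (Or.inr h))
  by_cases hv2 : p.2 - c₂ = 0
  · set lam := exitLam A₁ (A₁+s) c₁ (p.1 - c₁) with hlamdef
    have hl : 1 ≤ lam := exit_ge_one hv1 h11 h12
    have hq1 : c₂ + lam * (p.2 - c₂) ∈ Icc A₂ (A₂+s) := by
      rw [hv2, mul_zero, add_zero]
      constructor <;> [linarith [hp2.1]; linarith [hp2.2]]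
    rcases vert lam hl hq1 (exit_hit hv1) with h | h
    · exact Or.inl (Or.inr h)
    · exact Or.inr h
  by_cases hcmp : exitLam A₂ (A₂+s) c₂ (p.2 - c₂) ≤ exitLam A₁ (A₁+s) c₁ (p.1 - c₁)
  · set lam := exitLam A₂ (A₂+s) c₂ (p.2 - c₂) with hlamdef
    have hl : 1 ≤ lam := exit_ge_one hv2 h21 h22
    have hq1 : c₁ + lam * (p.1 - c₁) ∈ Icc A₁ (A₁+s) := exit_stay hv1 h11 h12 hl hcmp
    rcases horiz lam hl hq1 (exit_hit hv2) with h | h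
    · exact Or.inl (Or.inl (Or.inl (Or.inr h)))
    · exact Or.inl (Or.inl (Or.inr h))
  · set lam := exitLam A₁ (A₁+s) c₁ (p.1 - c₁) with hlamdef
    have hl : 1 ≤ lam := exit_ge_one hv1 h11 h12
    have hq1 : c₂ + lam * (p.2 - c₂) ∈ Icc A₂ (A₂+s) :=
      exit_stay hv2 h21 h22 hl (le_of_not_ge hcmp)
    rcases vert lam hl hq1 (exit_hit hv1) with h | h
    · exact Or.inl (Or.inr h)
    · exact Or.inr h

lemma swap_vol (S : Set (ℝ × ℝ)) (hS : NullMeasurableSet S volume) :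
    volume (Prod.swap '' S) = volume S := by
  rw [Set.image_swap_eq_preimage_swap, Measure.volume_eq_prod]
  rw [(Measure.measurePreserving_swap (μ := (volume : Measure ℝ)) (ν := (volume : Measure ℝ))).measure_preimage
    (by rwa [← Measure.volume_eq_prod])]

/-- **Annulus–square intersection area bound.** The area of the intersection of
a closed axis-aligned square of side `s > 0` with the annulus
`{x : r₁ ≤ ‖x − c‖ ≤ r₂}` is at most `4s·(r₂ − r₁)`, i.e. at most the width of
the annulus times the perimeter of the square. -/
theorem annulus_inter_square_area
    (s r₁ r₂ : ℝ) (hs : 0 < s) (hr₁ : 0 ≤ r₁) (hr : r₁ ≤ r₂)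
    (a c : EuclideanSpace ℝ (Fin 2)) :
    volume {x : EuclideanSpace ℝ (Fin 2) |
        (∀ i, x i ∈ Set.Icc (a i) (a i + s)) ∧ r₁ ≤ ‖x - c‖ ∧ ‖x - c‖ ≤ r₂}
      ≤ ENNReal.ofReal (4 * s * (r₂ - r₁)) := by
  set A₁ := a 0
  set A₂ := a 1
  set c₁ := c 0
  set c₂ := c 1
  set K : Set (ℝ × ℝ) := {p : ℝ × ℝ | p.1 ∈ Icc A₁ (A₁+s) ∧ p.2 ∈ Icc A₂ (A₂+s) ∧
      r₁ ≤ Real.sqrt ((p.1-c₁)^2 + (p.2-c₂)^2) ∧ Real.sqrt ((p.1-c₁)^2 + (p.2-c₂)^2) ≤ r₂}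
    with hKdef
  have hKmeas : MeasurableSet K := by
    have hcont : Continuous (fun p : ℝ × ℝ => Real.sqrt ((p.1-c₁)^2 + (p.2-c₂)^2)) := by fun_prop
    exact ((isClosed_Icc.preimage continuous_fst).inter
      ((isClosed_Icc.preimage continuous_snd).inter
        ((isClosed_Icc.preimage hcont)))).measurableSet
  have hF : MeasurePreserving (fun x : EuclideanSpace ℝ (Fin 2) => (x 0, x 1))
      volume volume :=
    (volume_preserving_finTwoArrow ℝ).comp (EuclideanSpace.volume_preserving_symm_measurableEquiv_toLp (ι := Fin 2))
  have hnorm : ∀ x : EuclideanSpace ℝ (Fin 2),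
      ‖x - c‖ = Real.sqrt ((x 0 - c₁)^2 + (x 1 - c₂)^2) := by
    intro x
    rw [EuclideanSpace.norm_eq]
    simp [Fin.sum_univ_two, Real.norm_eq_abs, sq_abs]
    rfl
  have hset : {x : EuclideanSpace ℝ (Fin 2) |
      (∀ i, x i ∈ Set.Icc (a i) (a i + s)) ∧ r₁ ≤ ‖x - c‖ ∧ ‖x - c‖ ≤ r₂}
      = (fun x : EuclideanSpace ℝ (Fin 2) => (x 0, x 1)) ⁻¹' K := by
    ext x
    simp only [mem_setOf_eq, mem_preimage, hKdef, hnorm x, Fin.forall_fin_two]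
    tauto
  rw [hset, hF.measure_preimage hKmeas.nullMeasurableSet]
  have hw : 0 ≤ s * (r₂ - r₁) := mul_nonneg hs.le (by linarith)
  have hnull : ∀ c₁' c₂' h L : ℝ,
      NullMeasurableSet (sideMap c₁' c₂' h '' sideSet c₁' h L s r₁ r₂) volume := by
    intro c₁' c₂' h L
    exact (((sideSet_isCompact c₁' h L s r₁ r₂).image
      (sideMap_continuous c₁' c₂' h)).isClosed.measurableSet).nullMeasurableSet
  calc volume K
      ≤ volume (({((c₁ : ℝ), (c₂ : ℝ))} : Set (ℝ × ℝ)) ∪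
          (sideMap c₁ c₂ (A₂+s-c₂) '' sideSet c₁ (A₂+s-c₂) A₁ s r₁ r₂) ∪
          (sideMap c₁ c₂ (A₂-c₂) '' sideSet c₁ (A₂-c₂) A₁ s r₁ r₂) ∪
          (Prod.swap '' (sideMap c₂ c₁ (A₁+s-c₁) '' sideSet c₂ (A₁+s-c₁) A₂ s r₁ r₂)) ∪
          (Prod.swap '' (sideMap c₂ c₁ (A₁-c₁) '' sideSet c₂ (A₁-c₁) A₂ s r₁ r₂))) :=
        measure_mono (cover A₁ A₂ c₁ c₂ s r₁ r₂)
    _ ≤ volume ({((c₁ : ℝ), (c₂ : ℝ))} : Set (ℝ × ℝ)) +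
          volume (sideMap c₁ c₂ (A₂+s-c₂) '' sideSet c₁ (A₂+s-c₂) A₁ s r₁ r₂) +
          volume (sideMap c₁ c₂ (A₂-c₂) '' sideSet c₁ (A₂-c₂) A₁ s r₁ r₂) +
          volume (Prod.swap '' (sideMap c₂ c₁ (A₁+s-c₁) '' sideSet c₂ (A₁+s-c₁) A₂ s r₁ r₂)) +
          volume (Prod.swap '' (sideMap c₂ c₁ (A₁-c₁) '' sideSet c₂ (A₁-c₁) A₂ s r₁ r₂)) := by
        refine le_trans (measure_union_le _ _) ?_
        refine add_le_add ?_ le_rfl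
        refine le_trans (measure_union_le _ _) ?_
        refine add_le_add ?_ le_rfl
        refine le_trans (measure_union_le _ _) ?_
        refine add_le_add ?_ le_rfl
        exact measure_union_le _ _
    _ ≤ 0 + ENNReal.ofReal (s * (r₂ - r₁)) + ENNReal.ofReal (s * (r₂ - r₁)) +
          ENNReal.ofReal (s * (r₂ - r₁)) + ENNReal.ofReal (s * (r₂ - r₁)) := by
        refine add_le_add (add_le_add (add_le_add (add_le_add ?_ ?_) ?_) ?_) ?_
        · rw [show volume ({((c₁ : ℝ), (c₂ : ℝ))} : Set (ℝ × ℝ)) = 0 from measure_singleton _]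
        · exact side_vol c₁ c₂ (A₂+s-c₂) A₁ s r₁ r₂ hr₁ hr
        · exact side_vol c₁ c₂ (A₂-c₂) A₁ s r₁ r₂ hr₁ hr
        · rw [swap_vol _ (hnull c₂ c₁ (A₁+s-c₁) A₂)]
          exact side_vol c₂ c₁ (A₁+s-c₁) A₂ s r₁ r₂ hr₁ hr
        · rw [swap_vol _ (hnull c₂ c₁ (A₁-c₁) A₂)]
          exact side_vol c₂ c₁ (A₁-c₁) A₂ s r₁ r₂ hr₁ hr
    _ = ENNReal.ofReal (4 * s * (r₂ - r₁)) := by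
        rw [zero_add, ← ENNReal.ofReal_add hw hw, ← ENNReal.ofReal_add (by linarith) hw,
          ← ENNReal.ofReal_add (by linarith) hw]
        congr 1
        ring
end

section
/- Let Q ⊂ ℝ² be a closed axis-aligned square of side length s > 0, let c ∈ ℝ² and u ≥ 0. Then the one-dimensional Hausdorff measure of {x ∈ Q : ‖x − c‖ = u} is at most 4s. -/
open MeasureTheory
open scoped MeasureTheory

open Set Real

lemma cov1d {E : Set ℝ} (hE : MeasurableSet E) {f f' : ℝ → ℝ}
    (h : ∀ x ∈ E, HasDerivWithinAt f (f' x) E x) (hinj : Set.InjOn f E) :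
    ∫⁻ x in E, ENNReal.ofReal |f' x| = volume (f '' E) := by
  have := lintegral_abs_det_fderiv_eq_addHaar_image volume hE
    (f' := fun x => ContinuousLinearMap.smulRight (1 : ℝ →L[ℝ] ℝ) (f' x))
    (fun x hx => (h x hx).hasFDerivWithinAt) hinj
  simpa [ContinuousLinearMap.one_def, ContinuousLinearMap.smulRight_id, ContinuousLinearMap.det_toSpanSingleton] using this

lemma piece_bound {E : Set ℝ} (hE : MeasurableSet E) {f f' : ℝ → ℝ}
    (h : ∀ x ∈ E, HasDerivWithinAt f (f' x) E x) (hinj : Set.InjOn f E)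
    {T : Set ℝ} (him : f '' E ⊆ T) :
    ∫⁻ x in E, ENNReal.ofReal |f' x| ≤ volume T := by
  rw [cov1d hE h hinj]; exact measure_mono him

lemma injOn_cos_neg : Set.InjOn Real.cos (Icc (-π) 0) := by
  intro x hx y hy h
  have hx' : -x ∈ Icc 0 π := ⟨neg_nonneg.2 hx.2, neg_le.1 (by simpa using hx.1)⟩
  have hy' : -y ∈ Icc 0 π := ⟨neg_nonneg.2 hy.2, neg_le.1 (by simpa using hy.1)⟩
  have := Real.injOn_cos hx' hy' (by rwa [Real.cos_neg, Real.cos_neg])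
  linarith [neg_inj.1 this]

lemma injOn_sin_right : Set.InjOn Real.sin (Icc (π/2) π) := by
  intro x hx y hy h
  have hπ := Real.pi_pos
  have hx' : π - x ∈ Icc (-(π/2)) (π/2) := ⟨by linarith [hx.2], by linarith [hx.1]⟩
  have hy' : π - y ∈ Icc (-(π/2)) (π/2) := ⟨by linarith [hy.2], by linarith [hy.1]⟩
  have := Real.injOn_sin hx' hy' (by rwa [Real.sin_pi_sub, Real.sin_pi_sub])
  linarith

lemma injOn_sin_left : Set.InjOn Real.sin (Icc (-π) (-(π/2))) := by
  intro x hx y hy h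
  have hπ := Real.pi_pos
  have hx' : -π - x ∈ Icc (-(π/2)) (π/2) := ⟨by linarith [hx.2], by linarith [hx.1]⟩
  have hy' : -π - y ∈ Icc (-(π/2)) (π/2) := ⟨by linarith [hy.2], by linarith [hy.1]⟩
  have hs : ∀ t : ℝ, Real.sin (-π - t) = Real.sin t := by
    intro t
    rw [show -π - t = -(t + π) by ring, Real.sin_neg, Real.sin_add_pi, neg_neg]
  have := Real.injOn_sin hx' hy' (by rwa [hs, hs])
  linarith

lemma angle_set_bound (p q δ : ℝ) (hδ : 0 ≤ δ) :
    volume (Icc (-π) π ∩ Real.cos ⁻¹' (Icc p (p + δ)) ∩ Real.sin ⁻¹' (Icc q (q + δ)))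
      ≤ ENNReal.ofReal (4 * δ) := by
  set A : Set ℝ :=
    Icc (-π) π ∩ Real.cos ⁻¹' (Icc p (p + δ)) ∩ Real.sin ⁻¹' (Icc q (q + δ)) with hA
  have hAm : MeasurableSet A :=
    ((measurableSet_Icc.inter
      (Real.continuous_cos.measurable measurableSet_Icc)).inter
      (Real.continuous_sin.measurable measurableSet_Icc))
  have hAcos : ∀ θ ∈ A, Real.cos θ ∈ Icc p (p + δ) := fun θ hθ => hθ.1.2
  have hAsin : ∀ θ ∈ A, Real.sin θ ∈ Icc q (q + δ) := fun θ hθ => hθ.2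
  -- step 1 : volume A ≤ ∫⁻ (|sin|+|cos|)
  have hmeas_s : Measurable fun θ : ℝ => ENNReal.ofReal |Real.sin θ| :=
    (ENNReal.continuous_ofReal.comp Real.continuous_sin.abs).measurable
  have hmeas_c : Measurable fun θ : ℝ => ENNReal.ofReal |Real.cos θ| :=
    (ENNReal.continuous_ofReal.comp Real.continuous_cos.abs).measurable
  have step1 : volume A ≤ ∫⁻ θ in A, (ENNReal.ofReal |Real.sin θ| + ENNReal.ofReal |Real.cos θ|) := by
    rw [← setLIntegral_one A]
    refine setLIntegral_mono (hmeas_s.add hmeas_c) (fun θ _ => ?_)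
    rw [← ENNReal.ofReal_add (abs_nonneg _) (abs_nonneg _), ← ENNReal.ofReal_one]
    apply ENNReal.ofReal_le_ofReal
    nlinarith [Real.sin_sq_add_cos_sq θ, abs_nonneg (Real.sin θ), abs_nonneg (Real.cos θ),
      sq_abs (Real.sin θ), sq_abs (Real.cos θ),
      mul_nonneg (abs_nonneg (Real.sin θ)) (abs_nonneg (Real.cos θ))]
  have step2 : ∫⁻ θ in A, (ENNReal.ofReal |Real.sin θ| + ENNReal.ofReal |Real.cos θ|)
      = (∫⁻ θ in A, ENNReal.ofReal |Real.sin θ|) + ∫⁻ θ in A, ENNReal.ofReal |Real.cos θ| :=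
    lintegral_add_left hmeas_s _
  -- sin integral
  have hsin_int : (∫⁻ θ in A, ENNReal.ofReal |Real.sin θ|) ≤ ENNReal.ofReal δ + ENNReal.ofReal δ := by
    have hsplit : (∫⁻ θ in A, ENNReal.ofReal |Real.sin θ|)
        ≤ (∫⁻ θ in A ∩ Icc 0 π, ENNReal.ofReal |Real.sin θ|)
          + ∫⁻ θ in A ∩ Icc (-π) 0, ENNReal.ofReal |Real.sin θ| := by
      refine le_trans (lintegral_mono_set ?_) (lintegral_union_le _ _ _)
      intro θ hθ
      rcases le_or_gt 0 θ with h | h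
      · exact Or.inl ⟨hθ, h, hθ.1.1.2⟩
      · exact Or.inr ⟨hθ, hθ.1.1.1, h.le⟩
    have h1 : (∫⁻ θ in A ∩ Icc 0 π, ENNReal.ofReal |Real.sin θ|) ≤ ENNReal.ofReal δ := by
      have := piece_bound (hAm.inter measurableSet_Icc)
        (f := Real.cos) (f' := fun x => -Real.sin x)
        (fun x _ => (Real.hasDerivAt_cos x).hasDerivWithinAt)
        (Real.injOn_cos.mono inter_subset_right)
        (T := Icc p (p + δ))
        (by rintro _ ⟨θ, hθ, rfl⟩; exact hAcos θ hθ.1)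
      rw [Real.volume_Icc] at this
      simpa [abs_neg] using this
    have h2 : (∫⁻ θ in A ∩ Icc (-π) 0, ENNReal.ofReal |Real.sin θ|) ≤ ENNReal.ofReal δ := by
      have := piece_bound (hAm.inter measurableSet_Icc)
        (f := Real.cos) (f' := fun x => -Real.sin x)
        (fun x _ => (Real.hasDerivAt_cos x).hasDerivWithinAt)
        (injOn_cos_neg.mono inter_subset_right)
        (T := Icc p (p + δ))
        (by rintro _ ⟨θ, hθ, rfl⟩; exact hAcos θ hθ.1)
      rw [Real.volume_Icc] at this
      simpa [abs_neg] using this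
    calc _ ≤ _ := hsplit
      _ ≤ _ := add_le_add h1 h2
  -- cos integral
  have hcos_int : (∫⁻ θ in A, ENNReal.ofReal |Real.cos θ|) ≤ ENNReal.ofReal δ + ENNReal.ofReal δ := by
    have hsplit : (∫⁻ θ in A, ENNReal.ofReal |Real.cos θ|)
        ≤ (∫⁻ θ in A ∩ Icc (-(π/2)) (π/2), ENNReal.ofReal |Real.cos θ|)
          + ((∫⁻ θ in A ∩ Icc (π/2) π, ENNReal.ofReal |Real.cos θ|)
            + ∫⁻ θ in A ∩ Icc (-π) (-(π/2)), ENNReal.ofReal |Real.cos θ|) := by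
      refine le_trans (lintegral_mono_set ?_)
        (le_trans (lintegral_union_le _ _ _) (add_le_add le_rfl (lintegral_union_le _ _ _)))
      intro θ hθ
      rcases le_or_gt θ (-(π/2)) with h | h
      · exact Or.inr (Or.inr ⟨hθ, hθ.1.1.1, h⟩)
      · rcases le_or_gt θ (π/2) with h' | h'
        · exact Or.inl ⟨hθ, h.le, h'⟩
        · exact Or.inr (Or.inl ⟨hθ, h'.le, hθ.1.1.2⟩)
    have h1 : (∫⁻ θ in A ∩ Icc (-(π/2)) (π/2), ENNReal.ofReal |Real.cos θ|) ≤ ENNReal.ofReal δ := by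
      have := piece_bound (hAm.inter measurableSet_Icc)
        (f := Real.sin) (f' := fun x => Real.cos x)
        (fun x _ => (Real.hasDerivAt_sin x).hasDerivWithinAt)
        (Real.injOn_sin.mono inter_subset_right)
        (T := Icc q (q + δ))
        (by rintro _ ⟨θ, hθ, rfl⟩; exact hAsin θ hθ.1)
      rw [Real.volume_Icc] at this
      simpa using this
    have h2 : (∫⁻ θ in A ∩ Icc (π/2) π, ENNReal.ofReal |Real.cos θ|)
        ≤ volume (Icc (max q 0) (q + δ)) := by
      refine piece_bound (hAm.inter measurableSet_Icc)
        (f := Real.sin) (f' := fun x => Real.cos x)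
        (fun x _ => (Real.hasDerivAt_sin x).hasDerivWithinAt)
        (injOn_sin_right.mono inter_subset_right) ?_
      rintro _ ⟨θ, hθ, rfl⟩
      have hq := hAsin θ hθ.1
      have h0 : 0 ≤ Real.sin θ :=
        Real.sin_nonneg_of_nonneg_of_le_pi (le_trans (by positivity) hθ.2.1) hθ.2.2
      exact ⟨max_le hq.1 h0, hq.2⟩
    have h3 : (∫⁻ θ in A ∩ Icc (-π) (-(π/2)), ENNReal.ofReal |Real.cos θ|)
        ≤ volume (Icc q (min (q + δ) 0)) := by
      refine piece_bound (hAm.inter measurableSet_Icc)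
        (f := Real.sin) (f' := fun x => Real.cos x)
        (fun x _ => (Real.hasDerivAt_sin x).hasDerivWithinAt)
        (injOn_sin_left.mono inter_subset_right) ?_
      rintro _ ⟨θ, hθ, rfl⟩
      have hq := hAsin θ hθ.1
      have h0 : Real.sin θ ≤ 0 :=
        Real.sin_nonpos_of_nonpos_of_neg_pi_le (le_trans hθ.2.2 (by linarith [Real.pi_pos])) hθ.2.1
      exact ⟨hq.1, le_min hq.2 h0⟩
    have key : volume (Icc (max q 0) (q + δ)) + volume (Icc q (min (q + δ) 0))
        ≤ ENNReal.ofReal δ := by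
      rw [Real.volume_Icc, Real.volume_Icc]
      rcases le_or_gt 0 q with h | h
      · rw [max_eq_left h]
        have : min (q + δ) 0 - q ≤ 0 := by
          have : min (q + δ) 0 ≤ 0 := min_le_right _ _
          linarith
        rw [ENNReal.ofReal_eq_zero.2 this, add_zero]
        exact ENNReal.ofReal_le_ofReal (by linarith)
      · rw [max_eq_right h.le]
        rcases le_or_gt (q + δ) 0 with h2 | h2
        · rw [min_eq_left h2, ENNReal.ofReal_eq_zero.2 (by linarith : q + δ - 0 ≤ 0), zero_add]
          exact ENNReal.ofReal_le_ofReal (by linarith)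
        · rw [min_eq_right h2.le, ← ENNReal.ofReal_add (by linarith) (by linarith)]
          exact ENNReal.ofReal_le_ofReal (by linarith)
    calc _ ≤ _ := hsplit
      _ ≤ ENNReal.ofReal δ + (volume (Icc (max q 0) (q + δ)) + volume (Icc q (min (q + δ) 0))) :=
        add_le_add h1 (add_le_add h2 h3)
      _ ≤ ENNReal.ofReal δ + ENNReal.ofReal δ := add_le_add le_rfl key
  calc volume A ≤ _ := step1
    _ = _ := step2
    _ ≤ (ENNReal.ofReal δ + ENNReal.ofReal δ) + (ENNReal.ofReal δ + ENNReal.ofReal δ) :=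
      add_le_add hsin_int hcos_int
    _ = ENNReal.ofReal (4 * δ) := by
      rw [← ENNReal.ofReal_add hδ hδ, ← ENNReal.ofReal_add (by linarith) (by linarith)]
      congr 1
      ring

lemma trig_sq_bound (a b : ℝ) :
    (Real.cos a - Real.cos b) ^ 2 + (Real.sin a - Real.sin b) ^ 2 ≤ (a - b) ^ 2 := by
  have h1 : (Real.cos a - Real.cos b) ^ 2 + (Real.sin a - Real.sin b) ^ 2
      = 2 - 2 * Real.cos (a - b) := by
    rw [Real.cos_sub]
    nlinarith [Real.sin_sq_add_cos_sq a, Real.sin_sq_add_cos_sq b]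
  have h2 := Real.one_sub_sq_div_two_le_cos (x := a - b)
  nlinarith

/-- **Circle–square intersection length bound.** The one-dimensional Hausdorff
measure of the portion of any circle (of centre `c` and radius `u ≥ 0`) lying in
a closed axis-aligned square of side `s > 0` is at most the perimeter `4s` of the
square. -/
theorem circle_inter_square_length
    (s u : ℝ) (hs : 0 < s) (hu : 0 ≤ u)
    (a c : EuclideanSpace ℝ (Fin 2)) :
    μH[1] {x : EuclideanSpace ℝ (Fin 2) |
        (∀ i, x i ∈ Set.Icc (a i) (a i + s)) ∧ ‖x - c‖ = u}
      ≤ ENNReal.ofReal (4 * s) := by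
  rcases hu.eq_or_lt with h0 | hu0
  · haveI : NoAtoms (μH[1] : Measure (EuclideanSpace ℝ (Fin 2))) :=
      MeasureTheory.Measure.noAtoms_hausdorff _ one_pos
    have hsub : {x : EuclideanSpace ℝ (Fin 2) |
        (∀ i, x i ∈ Set.Icc (a i) (a i + s)) ∧ ‖x - c‖ = u}
        ⊆ ({c} : Set (EuclideanSpace ℝ (Fin 2))) := by
      intro x hx
      have hn : ‖x - c‖ = 0 := by rw [hx.2, ← h0]
      simpa [sub_eq_zero] using hn
    refine le_trans (measure_mono hsub) ?_
    haveI := MeasureTheory.Measure.nullSingletonClass_hausdorff (EuclideanSpace ℝ (Fin 2)) one_pos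
    rw [measure_singleton]
    exact zero_le
  · have hne : u ≠ 0 := ne_of_gt hu0
    set δ := s / u with hδdef
    have hδ : 0 < δ := div_pos hs hu0
    set p := (a 0 - c 0) / u with hp
    set q := (a 1 - c 1) / u with hq
    set γ : ℝ → EuclideanSpace ℝ (Fin 2) := fun θ =>
      (WithLp.equiv 2 (Fin 2 → ℝ)).symm ![c 0 + u * Real.cos θ, c 1 + u * Real.sin θ] with hγ
    have hγ0 : ∀ θ, γ θ 0 = c 0 + u * Real.cos θ := by intro θ; simp [hγ]
    have hγ1 : ∀ θ, γ θ 1 = c 1 + u * Real.sin θ := by intro θ; simp [hγ]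
    have hLip : LipschitzWith ⟨u, hu⟩ γ := by
      apply LipschitzWith.of_dist_le_mul
      intro θ θ'
      simp only [EuclideanSpace.dist_eq, Fin.sum_univ_two, hγ0, hγ1, Real.dist_eq, sq_abs,
        NNReal.coe_mk]
      refine le_trans (Real.sqrt_le_sqrt ?_) (le_of_eq (Real.sqrt_sq (by positivity)))
      have h1 := mul_le_mul_of_nonneg_left (trig_sq_bound θ θ') (sq_nonneg u)
      have h2 : |θ - θ'| ^ 2 = (θ - θ') ^ 2 := sq_abs _
      change _ ≤ (u * |θ - θ'|) ^ 2
      nlinarith [h1, h2]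
    set A : Set ℝ :=
      Icc (-π) π ∩ Real.cos ⁻¹' (Icc p (p + δ)) ∩ Real.sin ⁻¹' (Icc q (q + δ)) with hA
    have hcover : {x : EuclideanSpace ℝ (Fin 2) |
        (∀ i, x i ∈ Set.Icc (a i) (a i + s)) ∧ ‖x - c‖ = u} ⊆ γ '' A := by
      rintro x ⟨hxQ, hxn⟩
      set z : ℂ := ⟨x 0 - c 0, x 1 - c 1⟩ with hz
      have habs : ‖z‖ = u := by
        rw [Complex.norm_def, hz, Complex.normSq_mk, ← hxn, EuclideanSpace.norm_eq]
        congr 1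
        rw [Fin.sum_univ_two]
        simp only [PiLp.sub_apply, Real.norm_eq_abs, sq_abs]
        ring
      have hz0 : z ≠ 0 := by
        intro h
        rw [h, norm_zero] at habs
        exact hne habs.symm
      have hcosθ : Real.cos (Complex.arg z) = (x 0 - c 0) / u := by
        rw [Complex.cos_arg hz0, habs, hz]
      have hsinθ : Real.sin (Complex.arg z) = (x 1 - c 1) / u := by
        rw [Complex.sin_arg, habs, hz]
      refine ⟨Complex.arg z, ⟨⟨⟨(Complex.arg_mem_Ioc z).1.le, (Complex.arg_mem_Ioc z).2⟩, ?_⟩, ?_⟩, ?_⟩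
      · rw [Set.mem_preimage, hcosθ]
        constructor
        · rw [hp]
          exact (div_le_div_iff_of_pos_right hu0).2 (by linarith [(hxQ 0).1])
        · have hpd : p + δ = (a 0 - c 0 + s) / u := by rw [hp, hδdef, ← add_div]
          rw [hpd]
          exact (div_le_div_iff_of_pos_right hu0).2 (by linarith [(hxQ 0).2])
      · rw [Set.mem_preimage, hsinθ]
        constructor
        · rw [hq]
          exact (div_le_div_iff_of_pos_right hu0).2 (by linarith [(hxQ 1).1])
        · have hqd : q + δ = (a 1 - c 1 + s) / u := by rw [hq, hδdef, ← add_div]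
          rw [hqd]
          exact (div_le_div_iff_of_pos_right hu0).2 (by linarith [(hxQ 1).2])
      · ext i
        fin_cases i
        · show γ _ 0 = x 0
          rw [hγ0, hcosθ]
          field_simp
          ring
        · show γ _ 1 = x 1
          rw [hγ1, hsinθ]
          field_simp
          ring
    calc μH[1] {x : EuclideanSpace ℝ (Fin 2) |
          (∀ i, x i ∈ Set.Icc (a i) (a i + s)) ∧ ‖x - c‖ = u}
        ≤ μH[1] (γ '' A) := measure_mono hcover
      _ ≤ (ENNReal.ofNNReal ⟨u, hu⟩) ^ (1 : ℝ) * μH[1] A :=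
          hLip.hausdorffMeasure_image_le zero_le_one A
      _ = ENNReal.ofReal u * volume A := by
          rw [ENNReal.rpow_one, MeasureTheory.hausdorffMeasure_real,
            ENNReal.ofReal_eq_coe_nnreal hu]
          rfl
      _ ≤ ENNReal.ofReal u * ENNReal.ofReal (4 * δ) := by
          exact mul_le_mul_right (angle_set_bound p q δ hδ.le) _
      _ = ENNReal.ofReal (4 * s) := by
          rw [← ENNReal.ofReal_mul hu]
          congr 1
          rw [hδdef]
          field_simp [hδdef]
end

section
/- Let P ⊂ ℝ² be a finite set, c ∈ ℝ², r > 0 and k a positive integer. Write D₁, D₃, D₅ for the closed discs of radii r, 3r, 5r about c. Suppose: (I) |P ∩ D₁| ≥ k + 1; (II) P ∩ (D₃ \ D₁) = ∅; (III) for every point p with ‖p − c‖ = 3r, the set P ∩ (closed ball of radius 2r about p) ∩ (D₅ \ D₃) has at least k + 1 elements. Then the k-nearest-neighbour graph G_{P,k} has no edge joining a point of P ∩ D₁ to a point of P \ D₁; that is, P ∩ D₁ is a union of connected components of G_{P,k}. -/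
open Metric

/-- `y` is among the `k` nearest neighbours of `x` in the finite set `P`:
the number of points `z ∈ P \ {x}` with `dist x z ≤ dist x y` is at most `k`. -/
def IsAmongKNearest (P : Finset (EuclideanSpace ℝ (Fin 2))) (k : ℕ)
    (x y : EuclideanSpace ℝ (Fin 2)) : Prop :=
  {z : EuclideanSpace ℝ (Fin 2) | z ∈ P ∧ z ≠ x ∧ dist x z ≤ dist x y}.ncard ≤ k

/-- The (undirected) `k`-nearest-neighbour graph `G_{P,k}` on the finite set
`P`: distinct points `x, y ∈ P` are joined whenever `y` is among the `k` nearest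
neighbours of `x` or `x` is among the `k` nearest neighbours of `y`. -/
def KnnEdge (P : Finset (EuclideanSpace ℝ (Fin 2))) (k : ℕ)
    (x y : EuclideanSpace ℝ (Fin 2)) : Prop :=
  x ∈ P ∧ y ∈ P ∧ x ≠ y ∧
    (IsAmongKNearest P k x y ∨ IsAmongKNearest P k y x)

/-- **Deterministic core of Lemma 2.** If (I) the disc `D₁` of radius `r` about
`c` contains at least `k+1` points of `P`, (II) the annulus `D₃ \ D₁` contains
no point of `P`, and (III) for every point `p` on the circle of radius `3r`
about `c` the region `(closed ball of radius 2r about p) ∩ (D₅ \ D₃)` contains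
at least `k+1` points of `P`, then the `k`-nearest-neighbour graph `G_{P,k}` has
no edge joining a point of `P ∩ D₁` to a point of `P \ D₁`. -/
theorem no_edge_leaving_inner_disc
    (P : Finset (EuclideanSpace ℝ (Fin 2))) (c : EuclideanSpace ℝ (Fin 2))
    (r : ℝ) (k : ℕ) (hr : 0 < r) (hk : 0 < k)
    (hI : k + 1 ≤ ((P : Set (EuclideanSpace ℝ (Fin 2))) ∩ closedBall c r).ncard)
    (hII : (P : Set (EuclideanSpace ℝ (Fin 2)))
        ∩ (closedBall c (3 * r) \ closedBall c r) = ∅)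
    (hIII : ∀ p : EuclideanSpace ℝ (Fin 2), ‖p - c‖ = 3 * r →
      k + 1 ≤ ((P : Set (EuclideanSpace ℝ (Fin 2))) ∩ closedBall p (2 * r)
        ∩ (closedBall c (5 * r) \ closedBall c (3 * r))).ncard) :
    ∀ x ∈ P, ∀ y ∈ P, x ∈ closedBall c r → y ∉ closedBall c r →
      ¬ KnnEdge P k x y := by
  intro x hx y hy hx1 hy1 hedge
  obtain ⟨-, -, hxy, hcase⟩ := hedge
  have hPfin : (P : Set (EuclideanSpace ℝ (Fin 2))).Finite := P.finite_toSet
  have hxc : dist x c ≤ r := mem_closedBall.mp hx1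
  have hyc : ¬ dist y c ≤ r := fun h => hy1 (mem_closedBall.mpr h)
  have hy3 : 3 * r < dist y c := by
    by_contra h
    push_neg at h
    have hmem : y ∈ (P : Set (EuclideanSpace ℝ (Fin 2)))
        ∩ (closedBall c (3 * r) \ closedBall c r) :=
      ⟨hy, mem_closedBall.mpr h, fun hc => hyc (mem_closedBall.mp hc)⟩
    rw [hII] at hmem
    exact hmem
  have hyx : dist y c - r ≤ dist y x := by
    have := dist_triangle y x c
    linarith
  have hxy2 : 2 * r < dist x y := by
    rw [dist_comm]
    linarith
  rcases hcase with h | h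
  · -- y among k nearest of x : too many points of D₁ plus y itself
    set S : Set (EuclideanSpace ℝ (Fin 2)) :=
      {z | z ∈ P ∧ z ≠ x ∧ dist x z ≤ dist x y} with hSdef
    have hSfin : S.Finite := hPfin.subset fun z hz => hz.1
    set A : Set (EuclideanSpace ℝ (Fin 2)) :=
      (P : Set (EuclideanSpace ℝ (Fin 2))) ∩ closedBall c r with hAdef
    have hAfin : A.Finite := hPfin.subset fun z hz => hz.1
    have hxA : x ∈ A := ⟨hx, hx1⟩
    have hsub : insert y (A \ {x}) ⊆ S := by
      rintro z (rfl | ⟨⟨hzP, hz1⟩, hzx⟩)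
      · exact ⟨hy, fun h => hxy (h ▸ rfl), le_refl _⟩
      · refine ⟨hzP, hzx, ?_⟩
        have hz1' : dist z c ≤ r := mem_closedBall.mp hz1
        have := dist_triangle x c z
        have : dist x z ≤ 2 * r := by
          have h2 := dist_triangle x c z
          have h3 : dist c z = dist z c := dist_comm c z
          linarith
        linarith
    have hyA : y ∉ A \ ({x} : Set _) := fun hmem => hy1 hmem.1.2
    have h1 : k ≤ (A \ {x}).ncard := by
      have := Set.ncard_diff_singleton_add_one hxA hAfin
      omega
    have h2 : k + 1 ≤ (insert y (A \ {x})).ncard := by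
      rw [Set.ncard_insert_of_notMem hyA hAfin.diff]
      omega
    have h3 := Set.ncard_le_ncard hsub hSfin
    have h' : S.ncard ≤ k := h
    omega
  · -- x among k nearest of y : use the annulus points near the projection p
    have hyc0 : (0 : ℝ) < dist y c := by linarith
    have hycnorm : dist y c = ‖y - c‖ := dist_eq_norm y c
    set t : ℝ := dist y c with ht
    set p : EuclideanSpace ℝ (Fin 2) := c + (3 * r / t) • (y - c) with hpdef
    have hpc : ‖p - c‖ = 3 * r := by
      have : p - c = (3 * r / t) • (y - c) := by
        rw [hpdef]; abel
      rw [this, norm_smul, ← hycnorm]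
      rw [Real.norm_eq_abs, abs_of_pos (by positivity)]
      field_simp
    have hyp : dist y p = t - 3 * r := by
      have hxx : y - p = (1 - 3 * r / t) • (y - c) := by
        rw [hpdef, sub_smul, one_smul]
        abel
      rw [dist_eq_norm, hxx, norm_smul, ← hycnorm, Real.norm_eq_abs]
      have hcoef : (0:ℝ) ≤ 1 - 3 * r / t := by
        rw [sub_nonneg, div_le_one hyc0]; linarith
      rw [abs_of_nonneg hcoef]
      field_simp
    set T : Set (EuclideanSpace ℝ (Fin 2)) :=
      {z | z ∈ P ∧ z ≠ y ∧ dist y z ≤ dist y x} with hTdef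
    have hTfin : T.Finite := hPfin.subset fun z hz => hz.1
    set B : Set (EuclideanSpace ℝ (Fin 2)) :=
      (P : Set (EuclideanSpace ℝ (Fin 2))) ∩ closedBall p (2 * r)
        ∩ (closedBall c (5 * r) \ closedBall c (3 * r)) with hBdef
    have hBfin : B.Finite := hPfin.subset fun z hz => hz.1.1
    have hBcard : k + 1 ≤ B.ncard := hIII p hpc
    have hsub : insert x (B \ {y}) ⊆ T := by
      rintro z (rfl | ⟨⟨⟨hzP, hzp⟩, hz5, hz3⟩, hzy⟩)
      · exact ⟨hx, hxy, le_refl _⟩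
      · refine ⟨hzP, hzy, ?_⟩
        have hzp' : dist z p ≤ 2 * r := mem_closedBall.mp hzp
        have h2 := dist_triangle y p z
        have h3 : dist p z = dist z p := dist_comm p z
        have : dist y z ≤ t - r := by linarith
        have := hyx
        linarith
    have hxB : x ∉ B \ ({y} : Set _) := by
      rintro ⟨⟨-, -, hx3⟩, -⟩
      exact hx3 (mem_closedBall.mpr (by linarith))
    have h1 : k ≤ (B \ {y}).ncard := by
      have hle : B ⊆ insert y (B \ {y}) := by
        intro z hz
        by_cases hzy : z = y
        · exact hzy ▸ Set.mem_insert _ _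
        · exact Set.mem_insert_of_mem _ ⟨hz, hzy⟩
      have := Set.ncard_le_ncard hle (hBfin.diff.insert y)
      have hins := Set.ncard_insert_le y (B \ ({y} : Set _))
      omega
    have h2 : k + 1 ≤ (insert x (B \ {y})).ncard := by
      rw [Set.ncard_insert_of_notMem hxB hBfin.diff]
      omega
    have h3 := Set.ncard_le_ncard hsub hTfin
    have h' : T.ncard ≤ k := h
    omega
end
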